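/- arXiv:2311.12413 — 4 statements merged into one kernel-verified Lean document; each statement's English description precedes it below -/
import Mathlib

section
/- Let P_1,…,P_K be probability measures on (Ω,ℱ) and X a random variable with max_i E_{P_i}[X²] < ∞. Then the upper variance V̄(X) := min_{μ∈ℝ} max_{1≤i≤K} E_{P_i}[(X−μ)²] equals sup over λ ∈ Δ^K of Var_{P_λ}(X), where P_λ = Σ_i λ_i P_i. In particular, the minimax value equals the maximum of Var_P(X) over the convex hull of {P_1,…,P_K}. -/
/-!
Write `a i = E_{P i}[X]`, `b i = E_{P i}[X²]` and `f i μ = E_{P i}[(X - μ)²] = b i - 2 a i μ + μ²`.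
For weights `w` in the simplex, `Var_{P_w}(X) = w ⬝ b - (w ⬝ a)²`, and
`∑ w i f i μ = Var_{P_w}(X) + (μ - w ⬝ a)² ≥ Var_{P_w}(X)`, which gives `min max ≥ sup Var`.
Conversely, take a maximiser `w` of `Var_{P_w}(X)` on the compact simplex and put `μ = w ⬝ a`.
Moving `w` towards the vertex `i` changes the variance by `t (f i μ - Var_{P_w}(X)) - t² (a i - μ)²`,
so maximality forces `f i μ ≤ Var_{P_w}(X)` for every `i`, i.e. `max_i f i μ ≤ sup Var`.
-/

open MeasureTheory Matrix Filter Set Topology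

lemma nonpos_of_forall_le_mul {c k : ℝ} (h : ∀ t ∈ Ioc (0 : ℝ) 1, c ≤ t * k) : c ≤ 0 := by
  have hlim : Tendsto (fun t : ℝ => t * k) (𝓝[>] 0) (𝓝 0) :=
    ((continuous_mul_const k).tendsto' 0 0 (zero_mul k)).mono_left nhdsWithin_le_nhds
  exact ge_of_tendsto hlim <| eventually_of_mem (Ioc_mem_nhdsGT one_pos) h

section MomentVariance

variable {ι : Type*} [Fintype ι] (a b : ι → ℝ)

/-- The variance of the `w`-mixture of laws with means `a i` and second moments `b i`. -/
def momentVariance (w : ι → ℝ) : ℝ := w ⬝ᵥ b - (w ⬝ᵥ a) ^ 2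

variable {a b}

lemma continuous_momentVariance : Continuous (momentVariance a b) := by
  unfold momentVariance
  fun_prop

lemma dotProduct_quadratic_eq_momentVariance_add_sq {w : ι → ℝ} (hw : ∑ i, w i = 1) (μ : ℝ) :
    w ⬝ᵥ (fun i => b i - 2 * a i * μ + μ ^ 2) = momentVariance a b w + (μ - w ⬝ᵥ a) ^ 2 := by
  have hexpand : w ⬝ᵥ (fun i => b i - 2 * a i * μ + μ ^ 2)
      = w ⬝ᵥ b - 2 * μ * (w ⬝ᵥ a) + μ ^ 2 * ∑ i, w i := by
    simp only [dotProduct, Finset.mul_sum, ← Finset.sum_sub_distrib, ← Finset.sum_add_distrib]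
    exact Finset.sum_congr rfl fun i _ => by ring
  rw [hexpand, hw, momentVariance]
  ring

lemma momentVariance_le_iSup {w : ι → ℝ} (hw : w ∈ stdSimplex ℝ ι) (μ : ℝ) :
    momentVariance a b w ≤ ⨆ i, (b i - 2 * a i * μ + μ ^ 2) := by
  have hbdd : BddAbove (range fun i => b i - 2 * a i * μ + μ ^ 2) := (finite_range _).bddAbove
  calc momentVariance a b w
      ≤ w ⬝ᵥ (fun i => b i - 2 * a i * μ + μ ^ 2) := by
        rw [dotProduct_quadratic_eq_momentVariance_add_sq hw.2]
        exact le_add_of_nonneg_right (sq_nonneg _)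
    _ ≤ w ⬝ᵥ (fun _ => ⨆ i, (b i - 2 * a i * μ + μ ^ 2)) :=
        dotProduct_le_dotProduct_of_nonneg_left (fun i => le_ciSup hbdd i) hw.1
    _ = ⨆ i, (b i - 2 * a i * μ + μ ^ 2) := by
        simp only [dotProduct, ← Finset.sum_mul, hw.2, one_mul]

lemma momentVariance_segment_single [DecidableEq ι] (w : ι → ℝ) (i : ι) (t : ℝ) :
    momentVariance a b ((1 - t) • w + t • Pi.single i 1) = momentVariance a b w
      + t * (b i - 2 * a i * (w ⬝ᵥ a) + (w ⬝ᵥ a) ^ 2 - momentVariance a b w)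
      - t ^ 2 * (a i - w ⬝ᵥ a) ^ 2 := by
  simp only [momentVariance, add_dotProduct, smul_dotProduct, single_dotProduct, smul_eq_mul]
  ring

lemma quadratic_le_momentVariance_of_isMaxOn {w : ι → ℝ} (hw : w ∈ stdSimplex ℝ ι)
    (hmax : IsMaxOn (momentVariance a b) (stdSimplex ℝ ι) w) (i : ι) :
    b i - 2 * a i * (w ⬝ᵥ a) + (w ⬝ᵥ a) ^ 2 ≤ momentVariance a b w := by
  classical
  suffices b i - 2 * a i * (w ⬝ᵥ a) + (w ⬝ᵥ a) ^ 2 - momentVariance a b w ≤ 0 by linarith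
  refine nonpos_of_forall_le_mul (k := (a i - w ⬝ᵥ a) ^ 2) fun t ⟨ht0, ht1⟩ => ?_
  have hmem : (1 - t) • w + t • Pi.single i 1 ∈ stdSimplex ℝ ι :=
    convex_stdSimplex ℝ ι hw (single_mem_stdSimplex ℝ i) (by linarith) ht0.le (by ring)
  have hle := hmax hmem
  rw [Set.mem_ofPred_eq, momentVariance_segment_single] at hle
  nlinarith

theorem iInf_iSup_quadratic_eq_iSup_momentVariance [Nonempty ι] :
    ⨅ μ : ℝ, ⨆ i, (b i - 2 * a i * μ + μ ^ 2) = ⨆ w : stdSimplex ℝ ι, momentVariance a b w.1 := by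
  have hbddBelow : BddBelow (range fun μ : ℝ => ⨆ i, (b i - 2 * a i * μ + μ ^ 2)) :=
    let w : stdSimplex ℝ ι := Classical.arbitrary _
    ⟨momentVariance a b w.1, forall_mem_range.2 (momentVariance_le_iSup w.2)⟩
  have hbddAbove : BddAbove (range fun w : stdSimplex ℝ ι => momentVariance a b w.1) :=
    ⟨_, forall_mem_range.2 fun w => momentVariance_le_iSup w.2 0⟩
  apply le_antisymm
  · obtain ⟨w, hw, hmax⟩ := (isCompact_stdSimplex ℝ ι).exists_isMaxOn
      (Set.nonempty_coe_sort.1 inferInstance) continuous_momentVariance.continuousOn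
    calc ⨅ μ : ℝ, ⨆ i, (b i - 2 * a i * μ + μ ^ 2)
        ≤ ⨆ i, (b i - 2 * a i * (w ⬝ᵥ a) + (w ⬝ᵥ a) ^ 2) := ciInf_le hbddBelow _
      _ ≤ momentVariance a b w := ciSup_le (quadratic_le_momentVariance_of_isMaxOn hw hmax)
      _ ≤ ⨆ w : stdSimplex ℝ ι, momentVariance a b w.1 := le_ciSup hbddAbove ⟨w, hw⟩
  · exact ciSup_le fun w => le_ciInf (momentVariance_le_iSup w.2)

end MomentVariance

section Mixture

variable {Ω ι : Type*} [MeasurableSpace Ω] [Fintype ι]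

lemma integral_sub_const_sq {μ : Measure Ω} [IsProbabilityMeasure μ] {X : Ω → ℝ}
    (hX : Integrable X μ) (hX2 : Integrable (fun ω => X ω ^ 2) μ) (c : ℝ) :
    ∫ ω, (X ω - c) ^ 2 ∂μ = ∫ ω, X ω ^ 2 ∂μ - 2 * (∫ ω, X ω ∂μ) * c + c ^ 2 := by
  have hexpand : (fun ω => (X ω - c) ^ 2) = fun ω => (X ω ^ 2 - 2 * c * X ω) + c ^ 2 := by
    funext ω
    ring
  have hlin : Integrable (fun ω => X ω ^ 2 - 2 * c * X ω) μ := hX2.sub (hX.const_mul _)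
  rw [hexpand, integral_add hlin (integrable_const _), integral_sub hX2 (hX.const_mul _),
    integral_const_mul, integral_const, probReal_univ, one_smul]
  ring

noncomputable def mixture (P : ι → Measure Ω) (w : ι → ℝ) : Measure Ω :=
  ∑ i, ENNReal.ofReal (w i) • P i

variable {P : ι → Measure Ω} {w : ι → ℝ} {f : Ω → ℝ}

lemma integrable_mixture (hf : ∀ i, Integrable f (P i)) : Integrable f (mixture P w) :=
  integrable_finsetSum_measure.2 fun i _ => (hf i).smul_measure ENNReal.ofReal_ne_top

lemma integral_mixture (hw : ∀ i, 0 ≤ w i) (hf : ∀ i, Integrable f (P i)) :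
    ∫ ω, f ω ∂(mixture P w) = w ⬝ᵥ fun i => ∫ ω, f ω ∂P i := by
  rw [mixture, integral_finsetSum_measure fun i _ => (hf i).smul_measure ENNReal.ofReal_ne_top]
  refine Finset.sum_congr rfl fun i _ => ?_
  rw [integral_smul_measure, ENNReal.toReal_ofReal (hw i), smul_eq_mul]

lemma isProbabilityMeasure_mixture [∀ i, IsProbabilityMeasure (P i)] (hw : w ∈ stdSimplex ℝ ι) :
    IsProbabilityMeasure (mixture P w) := by
  constructor
  simp [mixture, ← ENNReal.ofReal_sum_of_nonneg fun i _ => hw.1 i, hw.2]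

lemma integral_sub_integral_sq_mixture [∀ i, IsProbabilityMeasure (P i)] (hw : w ∈ stdSimplex ℝ ι)
    {X : Ω → ℝ} (hX : ∀ i, Integrable X (P i)) (hX2 : ∀ i, Integrable (fun ω => X ω ^ 2) (P i)) :
    ∫ ω, (X ω - ∫ ω', X ω' ∂(mixture P w)) ^ 2 ∂(mixture P w)
      = momentVariance (fun i => ∫ ω, X ω ∂P i) (fun i => ∫ ω, X ω ^ 2 ∂P i) w := by
  have := isProbabilityMeasure_mixture (P := P) hw
  rw [integral_sub_const_sq (integrable_mixture hX) (integrable_mixture hX2),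
    integral_mixture hw.1 hX, integral_mixture hw.1 hX2, momentVariance]
  ring

end Mixture

/-- Variance envelope theorem: the upper variance
`V̄(X) = min_μ max_i E_{P_i}[(X-μ)²]` equals the supremum of `Var_{P_λ}(X)` over the
convex hull of `{P_1, …, P_K}` (mixtures `P_λ = ∑ λ_i P_i`, `λ` in the unit simplex). -/
theorem upper_variance_stmt2
    {Ω : Type*} [MeasurableSpace Ω] {K : ℕ} (hK : 0 < K)
    (P : Fin K → Measure Ω) [∀ i, IsProbabilityMeasure (P i)]
    (X : Ω → ℝ) (hX : ∀ i, Integrable X (P i))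
    (hX2 : ∀ i, Integrable (fun ω => X ω ^ 2) (P i)) :
    (⨅ μ : ℝ, ⨆ i, ∫ ω, (X ω - μ) ^ 2 ∂(P i))
      = ⨆ l : {l : Fin K → ℝ // (∀ i, 0 ≤ l i) ∧ ∑ i, l i = 1},
          (∫ ω, (X ω - ∫ ω', X ω' ∂(∑ i, ENNReal.ofReal (l.1 i) • P i)) ^ 2
            ∂(∑ i, ENNReal.ofReal (l.1 i) • P i)) := by
  have : Nonempty (Fin K) := Fin.pos_iff_nonempty.1 hK
  simp_rw [integral_sub_const_sq (hX _) (hX2 _)]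
  rw [iInf_iSup_quadratic_eq_iSup_momentVariance]
  exact iSup_congr fun w => (integral_sub_integral_sq_mixture w.2 hX hX2).symm
end

section
/- Two-measure formula for the minimax: let μ_1 ≤ μ_2 and κ_1, κ_2 ∈ ℝ with κ_i ≥ μ_i² (i = 1,2), and define f_i(μ) = μ² − 2μ_i μ + κ_i, h(x) = x² − 2μ_1 x + κ_1, and μ₁₂ = (μ_1 ∨ (κ_2 − κ_1)/(2(μ_2 − μ_1))) ∧ μ_2 when μ_1 < μ_2, while μ₁₂ = μ_1 when μ_1 = μ_2. Then min over μ ∈ [μ_1, μ_2] of max{f_1(μ), f_2(μ)} = max{κ_1 − μ_1², κ_2 − μ_2², h(μ₁₂)}. -/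
/-!
Write `f_i(x) = x² - 2μ_i x + κ_i = (x - μ_i)² + (κ_i - μ_i²)`. On `[μ₁, μ₂]` the parabola `f₁` is
increasing, `f₂` is decreasing, and `f₂ - f₁` is affine with its zero at
`c = (κ₂ - κ₁) / (2(μ₂ - μ₁))`. Hence `max f₁ f₂` is minimised at the projection `μ₁₂` of `c`
onto `[μ₁, μ₂]`, where its value is `f₁(μ₁₂)` unless `μ₁₂` is the endpoint `μ₂` with
`f₂(μ₂) = κ₂ - μ₂²` on top. Since `f_i ≥ κ_i - μ_i²` everywhere, adding these two terms to the
maximum does not change it.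
-/

open Set

/-- `E_P[(X - x)²]` for a law `P` with `E_P[X] = μ` and `E_P[X²] = κ`. -/
def meanSqDev (μ κ x : ℝ) : ℝ := x ^ 2 - 2 * μ * x + κ

/-- The paper's `μ₁₂`: the zero of `meanSqDev μ₂ κ₂ - meanSqDev μ₁ κ₁`, clamped to `[μ₁, μ₂]`. -/
noncomputable def balancePoint (μ₁ μ₂ κ₁ κ₂ : ℝ) : ℝ :=
  if μ₁ < μ₂ then min (max μ₁ ((κ₂ - κ₁) / (2 * (μ₂ - μ₁)))) μ₂ else μ₁

namespace meanSqDev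

theorem eq_sq_add (μ κ x : ℝ) : meanSqDev μ κ x = (x - μ) ^ 2 + (κ - μ ^ 2) := by
  unfold meanSqDev; ring

theorem sub_sq_le (μ κ x : ℝ) : κ - μ ^ 2 ≤ meanSqDev μ κ x := by
  rw [eq_sq_add]; exact le_add_of_nonneg_left (sq_nonneg _)

theorem monotoneOn_Ici (μ κ : ℝ) : MonotoneOn (meanSqDev μ κ) (Ici μ) := by
  intro y hy x _ hyx
  simp only [eq_sq_add]
  nlinarith [mem_Ici.mp hy]

theorem antitoneOn_Iic (μ κ : ℝ) : AntitoneOn (meanSqDev μ κ) (Iic μ) := by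
  intro y _ x hx hyx
  simp only [eq_sq_add]
  nlinarith [mem_Iic.mp hx]

theorem self_eq (μ κ : ℝ) : meanSqDev μ κ μ = κ - μ ^ 2 := by
  rw [eq_sq_add, sub_self]; ring

theorem sub_eq_mul {μ₁ μ₂ : ℝ} (κ₁ κ₂ x : ℝ) (hμ : μ₁ ≠ μ₂) :
    meanSqDev μ₂ κ₂ x - meanSqDev μ₁ κ₁ x =
      2 * (μ₂ - μ₁) * ((κ₂ - κ₁) / (2 * (μ₂ - μ₁)) - x) := by
  have : 2 * (μ₂ - μ₁) ≠ 0 := mul_ne_zero two_ne_zero (sub_ne_zero.mpr hμ.symm)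
  rw [mul_sub, mul_div_cancel₀ _ this]
  unfold meanSqDev; ring

theorem le_iff_le_div {μ₁ μ₂ : ℝ} (κ₁ κ₂ x : ℝ) (hμ : μ₁ < μ₂) :
    meanSqDev μ₁ κ₁ x ≤ meanSqDev μ₂ κ₂ x ↔ x ≤ (κ₂ - κ₁) / (2 * (μ₂ - μ₁)) := by
  rw [← sub_nonneg, sub_eq_mul κ₁ κ₂ x hμ.ne, mul_nonneg_iff_of_pos_left (by linarith), sub_nonneg]

theorem le_iff_div_le {μ₁ μ₂ : ℝ} (κ₁ κ₂ x : ℝ) (hμ : μ₁ < μ₂) :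
    meanSqDev μ₂ κ₂ x ≤ meanSqDev μ₁ κ₁ x ↔ (κ₂ - κ₁) / (2 * (μ₂ - μ₁)) ≤ x := by
  rw [← sub_nonpos, sub_eq_mul κ₁ κ₂ x hμ.ne, ← neg_nonneg, ← mul_neg,
    mul_nonneg_iff_of_pos_left (by linarith), neg_nonneg, sub_nonpos]

end meanSqDev

open meanSqDev

theorem isLeast_image_max_meanSqDev {μ₁ μ₂ κ₁ κ₂ m : ℝ} (hm : m ∈ Icc μ₁ μ₂)
    (hleft : μ₁ < m → meanSqDev μ₁ κ₁ m ≤ meanSqDev μ₂ κ₂ m)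
    (hright : m < μ₂ → meanSqDev μ₂ κ₂ m ≤ meanSqDev μ₁ κ₁ m) :
    IsLeast ((fun x => max (meanSqDev μ₁ κ₁ x) (meanSqDev μ₂ κ₂ x)) '' Icc μ₁ μ₂)
      (max (max (κ₁ - μ₁ ^ 2) (κ₂ - μ₂ ^ 2)) (meanSqDev μ₁ κ₁ m)) := by
  obtain ⟨hm₁, hm₂⟩ := hm
  refine ⟨⟨m, ⟨hm₁, hm₂⟩, ?_⟩, ?_⟩
  · refine le_antisymm (max_le (le_max_right _ _) ?_) (max_le (max_le ?_ ?_) (le_max_left _ _))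
    · rcases hm₂.lt_or_eq with hlt | rfl
      · exact le_max_of_le_right (hright hlt)
      · exact le_max_of_le_left ((self_eq m κ₂).le.trans (le_max_right _ _))
    · exact le_max_of_le_left (sub_sq_le _ _ _)
    · exact le_max_of_le_right (sub_sq_le _ _ _)
  · rintro _ ⟨x, ⟨hx₁, hx₂⟩, rfl⟩
    refine max_le (max_le (le_max_of_le_left (sub_sq_le _ _ _))
      (le_max_of_le_right (sub_sq_le _ _ _))) ?_
    rcases le_or_gt m x with hmx | hxm
    · exact le_max_of_le_left (monotoneOn_Ici μ₁ κ₁ hm₁ (hm₁.trans hmx) hmx)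
    · calc meanSqDev μ₁ κ₁ m ≤ meanSqDev μ₂ κ₂ m := hleft (hx₁.trans_lt hxm)
        _ ≤ meanSqDev μ₂ κ₂ x := antitoneOn_Iic μ₂ κ₂ (hx₂ : x ≤ μ₂) hm₂ hxm.le
        _ ≤ _ := le_max_right _ _

namespace balancePoint

variable {μ₁ μ₂ : ℝ} (κ₁ κ₂ : ℝ)

theorem mem_Icc (h : μ₁ ≤ μ₂) : balancePoint μ₁ μ₂ κ₁ κ₂ ∈ Icc μ₁ μ₂ := by
  unfold balancePoint
  split_ifs
  · exact ⟨le_min (le_max_left _ _) h, min_le_right _ _⟩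
  · exact ⟨le_rfl, h⟩

theorem meanSqDev_le_of_left_lt (hlt : μ₁ < balancePoint μ₁ μ₂ κ₁ κ₂) :
    meanSqDev μ₁ κ₁ (balancePoint μ₁ μ₂ κ₁ κ₂) ≤ meanSqDev μ₂ κ₂ (balancePoint μ₁ μ₂ κ₁ κ₂) := by
  unfold balancePoint at *
  split_ifs at * with hμ
  · rw [le_iff_le_div κ₁ κ₂ _ hμ]
    have hc : μ₁ < (κ₂ - κ₁) / (2 * (μ₂ - μ₁)) :=
      lt_max_iff.mp (hlt.trans_le (min_le_left _ _)) |>.resolve_left (lt_irrefl _)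
    exact (min_le_left _ _).trans (max_eq_right hc.le).le
  · exact absurd hlt (lt_irrefl _)

theorem meanSqDev_le_of_lt_right (h : μ₁ ≤ μ₂) (hlt : balancePoint μ₁ μ₂ κ₁ κ₂ < μ₂) :
    meanSqDev μ₂ κ₂ (balancePoint μ₁ μ₂ κ₁ κ₂) ≤ meanSqDev μ₁ κ₁ (balancePoint μ₁ μ₂ κ₁ κ₂) := by
  unfold balancePoint at *
  split_ifs at * with hμ
  · rw [le_iff_div_le κ₁ κ₂ _ hμ]
    have hc : max μ₁ ((κ₂ - κ₁) / (2 * (μ₂ - μ₁))) < μ₂ :=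
      min_lt_iff.mp hlt |>.resolve_right (lt_irrefl _)
    exact (le_max_right _ _).trans (min_eq_left hc.le).ge
  · exact absurd h (by linarith)

end balancePoint

theorem upper_variance_stmt8_general
    (μ₁ μ₂ κ₁ κ₂ : ℝ) (h : μ₁ ≤ μ₂) :
    sInf ((fun x : ℝ =>
        max (x ^ 2 - 2 * μ₁ * x + κ₁) (x ^ 2 - 2 * μ₂ * x + κ₂)) '' Set.Icc μ₁ μ₂)
      = max (max (κ₁ - μ₁ ^ 2) (κ₂ - μ₂ ^ 2))
          ((fun x : ℝ => x ^ 2 - 2 * μ₁ * x + κ₁)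
            (if μ₁ < μ₂ then min (max μ₁ ((κ₂ - κ₁) / (2 * (μ₂ - μ₁)))) μ₂ else μ₁)) :=
  (isLeast_image_max_meanSqDev (balancePoint.mem_Icc κ₁ κ₂ h)
    (balancePoint.meanSqDev_le_of_left_lt κ₁ κ₂)
    (balancePoint.meanSqDev_le_of_lt_right κ₁ κ₂ h)).csInf_eq

/-- Two-measure formula for the minimax: for `μ₁ ≤ μ₂`, `κ_i ≥ μ_i²`,
`min_{μ ∈ [μ₁, μ₂]} max{f₁(μ), f₂(μ)} = max{κ₁ - μ₁², κ₂ - μ₂², h(μ₁₂)}` where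
`h(x) = x² - 2μ₁x + κ₁` and `μ₁₂` is the clamped intersection point. -/
theorem upper_variance_stmt8
    (μ₁ μ₂ κ₁ κ₂ : ℝ) (h : μ₁ ≤ μ₂) (h1 : μ₁ ^ 2 ≤ κ₁) (h2 : μ₂ ^ 2 ≤ κ₂) :
    sInf ((fun x : ℝ =>
        max (x ^ 2 - 2 * μ₁ * x + κ₁) (x ^ 2 - 2 * μ₂ * x + κ₂)) '' Set.Icc μ₁ μ₂)
      = max (max (κ₁ - μ₁ ^ 2) (κ₂ - μ₂ ^ 2))
          ((fun x : ℝ => x ^ 2 - 2 * μ₁ * x + κ₁)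
            (if μ₁ < μ₂ then min (max μ₁ ((κ₂ - κ₁) / (2 * (μ₂ - μ₁)))) μ₂ else μ₁)) :=
  upper_variance_stmt8_general μ₁ μ₂ κ₁ κ₂ h
end

section
/- General formula for the minimax of K parabolas: let μ_1 ≤ μ_2 ≤ ⋯ ≤ μ_K and κ_1,…,κ_K ∈ ℝ with κ_i ≥ μ_i² for all i. Define f_i(μ) = μ² − 2μ_i μ + κ_i, h_{ij}(x) = x² − 2μ_i x + κ_i, and for i < j set μ_{ij} = (μ_i ∨ (κ_j − κ_i)/(2(μ_j − μ_i))) ∧ μ_j if μ_i < μ_j, and μ_{ij} = μ_i if μ_i = μ_j. Then min over μ ∈ [μ_1, μ_K] of max_{1≤i≤K} f_i(μ) = max{ max_{1≤i≤K} (κ_i − μ_i²), max_{1≤i<j≤K} h_{ij}(μ_{ij}) }. -/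
/-!
Write `f_i(x) = (x - μ_i)² + (κ_i - μ_i²)`. Both terms on the right-hand side are lower bounds
for `max_i f_i`: the first trivially, the pairwise one because `μ_{ij}` (the crossing point of
`f_i` and `f_j`, clamped to `[μ_i, μ_j]`) minimises `max (f_i, f_j)`. Conversely, if `t` is the
right-hand side, every sublevel set `{f_i ≤ t}` is an interval around `μ_i`, and any two of them
meet (at `μ_{ij}`); intervals of the line that meet pairwise have a common point, which can be
taken in `[μ_1, μ_K]`.
-/

open Finset

section Intervals

variable {ι α : Type*} [Fintype ι] [Nonempty ι] [LinearOrder α]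

theorem exists_mem_Icc_forall_mem_Icc_of_le {a b : α} (hab : a ≤ b) (l u : ι → α)
    (hlu : ∀ i j, l i ≤ u j) (ha : ∀ i, a ≤ u i) (hb : ∀ i, l i ≤ b) :
    ∃ x ∈ Set.Icc a b, ∀ i, x ∈ Set.Icc (l i) (u i) := by
  refine ⟨max a (univ.sup' univ_nonempty l), ⟨le_max_left _ _, ?_⟩, fun i => ⟨?_, ?_⟩⟩
  · exact max_le hab (sup'_le _ _ fun i _ => hb i)
  · exact (le_sup' l (mem_univ i)).trans (le_max_right _ _)
  · exact max_le (ha i) (sup'_le _ _ fun j _ => hlu j i)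

end Intervals

def parabola (a c x : ℝ) : ℝ := x ^ 2 - 2 * a * x + c

namespace parabola

variable {a c t x : ℝ}

theorem eq_sq_add (a c x : ℝ) : parabola a c x = (x - a) ^ 2 + (c - a ^ 2) := by
  unfold parabola; ring

theorem self (a c : ℝ) : parabola a c a = c - a ^ 2 := by
  rw [eq_sq_add]; ring

theorem sub_sq_le (a c x : ℝ) : c - a ^ 2 ≤ parabola a c x := by
  rw [eq_sq_add]; nlinarith [sq_nonneg (x - a)]

theorem sub_eq (a b c d x : ℝ) :
    parabola a c x - parabola b d x = 2 * (b - a) * x - (d - c) := by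
  unfold parabola; ring

theorem monotoneOn (a c : ℝ) : MonotoneOn (parabola a c) (Set.Ici a) := by
  intro x hx y _ hxy
  rw [eq_sq_add, eq_sq_add]; nlinarith [Set.mem_Ici.1 hx]

theorem antitoneOn (a c : ℝ) : AntitoneOn (parabola a c) (Set.Iic a) := by
  intro x _ y hy hxy
  rw [eq_sq_add, eq_sq_add]; nlinarith [Set.mem_Iic.1 hy]

theorem le_iff_mem_Icc (h : c - a ^ 2 ≤ t) :
    parabola a c x ≤ t ↔
      x ∈ Set.Icc (a - √(t - (c - a ^ 2))) (a + √(t - (c - a ^ 2))) := by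
  rw [eq_sq_add, ← le_sub_iff_add_le, Real.sq_le (sub_nonneg.2 h), Set.mem_Icc]
  constructor <;> rintro ⟨h₁, h₂⟩ <;> constructor <;> linarith

end parabola

theorem exists_mem_Icc_forall_parabola_le {ι : Type*} [Fintype ι] [Nonempty ι] (a c : ι → ℝ)
    {t lo hi : ℝ} (hlo : ∀ i, lo ≤ a i) (hhi : ∀ i, a i ≤ hi)
    (hpair : ∀ i j, ∃ m, parabola (a i) (c i) m ≤ t ∧ parabola (a j) (c j) m ≤ t) :
    ∃ x ∈ Set.Icc lo hi, ∀ i, parabola (a i) (c i) x ≤ t := by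
  have hvertex (i : ι) : c i - a i ^ 2 ≤ t := by
    obtain ⟨m, hm, -⟩ := hpair i i
    exact (parabola.sub_sq_le _ _ m).trans hm
  set r : ι → ℝ := fun i => √(t - (c i - a i ^ 2))
  have hr (i : ι) : 0 ≤ r i := Real.sqrt_nonneg _
  obtain ⟨i₀⟩ := ‹Nonempty ι›
  obtain ⟨x, hx, hxi⟩ := exists_mem_Icc_forall_mem_Icc_of_le ((hlo i₀).trans (hhi i₀))
    (fun i => a i - r i) (fun i => a i + r i)
    (fun i j => by
      obtain ⟨m, hmi, hmj⟩ := hpair i j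
      exact ((parabola.le_iff_mem_Icc (hvertex i)).1 hmi).1.trans
        ((parabola.le_iff_mem_Icc (hvertex j)).1 hmj).2)
    (fun i => by linarith [hlo i, hr i]) (fun i => by linarith [hhi i, hr i])
  exact ⟨x, hx, fun i => (parabola.le_iff_mem_Icc (hvertex i)).2 (hxi i)⟩

/-- The point `μ_{ij}` of the statement, for `a = μ_i`, `b = μ_j`, `c = κ_i`, `d = κ_j`. -/
noncomputable def pairPoint (a b c d : ℝ) : ℝ :=
  if a < b then min (max a ((d - c) / (2 * (b - a)))) b else a

namespace pairPoint

variable {a b c d t : ℝ}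

theorem trichotomy (hab : a ≤ b) :
    (pairPoint a b c d = a ∧ parabola b d a ≤ parabola a c a) ∨
      (pairPoint a b c d = b ∧ parabola a c b ≤ parabola b d b) ∨
      (a ≤ pairPoint a b c d ∧ pairPoint a b c d ≤ b ∧
        parabola a c (pairPoint a b c d) = parabola b d (pairPoint a b c d)) := by
  have hsub := parabola.sub_eq a b c d
  rcases hab.lt_or_eq with hlt | rfl
  · -- `parabola a c - parabola b d` is increasing and vanishes at `s`
    set s := (d - c) / (2 * (b - a))
    have hs : 2 * (b - a) * s = d - c := mul_div_cancel₀ _ (by linarith)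
    have hb : 0 ≤ b - a := by linarith
    rw [pairPoint, if_pos hlt]
    rcases le_or_gt s a with hsa | has
    · left
      refine ⟨by rw [max_eq_left hsa, min_eq_left hlt.le], ?_⟩
      nlinarith [hsub a, mul_le_mul_of_nonneg_left hsa hb]
    rcases le_or_gt b s with hbs | hsb
    · right; left
      refine ⟨by rw [max_eq_right has.le, min_eq_right hbs], ?_⟩
      nlinarith [hsub b, mul_le_mul_of_nonneg_left hbs hb]
    · right; right
      rw [max_eq_right has.le, min_eq_left hsb.le]
      exact ⟨has.le, hsb.le, by linarith [hsub s]⟩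
  · rw [pairPoint, if_neg (lt_irrefl a)]
    rcases le_total d c with hdc | hcd
    · left; exact ⟨rfl, by rw [parabola.self, parabola.self]; linarith⟩
    · right; left; exact ⟨rfl, by rw [parabola.self, parabola.self]; linarith⟩

theorem parabola_le_max (hab : a ≤ b) (x : ℝ) :
    parabola a c (pairPoint a b c d) ≤ max (parabola a c x) (parabola b d x) := by
  rcases trichotomy (c := c) (d := d) hab with ⟨hm, -⟩ | ⟨hm, hle⟩ | ⟨ham, hmb, heq⟩
  · rw [hm, parabola.self]
    exact (parabola.sub_sq_le a c x).trans (le_max_left _ _)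
  · rw [hm]
    exact hle.trans ((parabola.self b d).trans_le (parabola.sub_sq_le b d x) |>.trans
      (le_max_right _ _))
  · rcases le_total (pairPoint a b c d) x with hmx | hxm
    · exact (parabola.monotoneOn a c ham (ham.trans hmx) hmx).trans (le_max_left _ _)
    · rw [heq]
      exact (parabola.antitoneOn b d (hxm.trans hmb) hmb hxm).trans (le_max_right _ _)

theorem parabola_right_le (hab : a ≤ b) (ha : c - a ^ 2 ≤ t) (hb : d - b ^ 2 ≤ t)
    (hm : parabola a c (pairPoint a b c d) ≤ t) : parabola b d (pairPoint a b c d) ≤ t := by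
  rcases trichotomy (c := c) (d := d) hab with ⟨he, hle⟩ | ⟨he, -⟩ | ⟨-, -, heq⟩
  · rw [he]; exact hle.trans ((parabola.self a c).trans_le ha)
  · rw [he, parabola.self]; exact hb
  · rwa [← heq]

end pairPoint

theorem sInf_image_iSup_parabola {ι : Type*} [Fintype ι] [LinearOrder ι] (μ κ : ι → ℝ)
    (hmono : Monotone μ) {lo hi : ℝ} (hlo : ∀ i, lo ≤ μ i) (hhi : ∀ i, μ i ≤ hi)
    (hpairs : (univ.filter fun p : ι × ι => p.1 < p.2).Nonempty) :
    sInf ((fun x => ⨆ i, parabola (μ i) (κ i) x) '' Set.Icc lo hi) =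
      max (⨆ i, (κ i - μ i ^ 2))
        ((univ.filter fun p : ι × ι => p.1 < p.2).sup' hpairs
          fun p => parabola (μ p.1) (κ p.1) (pairPoint (μ p.1) (μ p.2) (κ p.1) (κ p.2))) := by
  have : Nonempty ι := ⟨hpairs.choose.1⟩
  set g : ι × ι → ℝ := fun p =>
    parabola (μ p.1) (κ p.1) (pairPoint (μ p.1) (μ p.2) (κ p.1) (κ p.2))
  set t := max (⨆ i, (κ i - μ i ^ 2))
    ((univ.filter fun p : ι × ι => p.1 < p.2).sup' hpairs g)
  have hbdd (x : ℝ) : BddAbove (Set.range fun i => parabola (μ i) (κ i) x) :=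
    (Set.finite_range _).bddAbove
  have hvertex (i : ι) : κ i - μ i ^ 2 ≤ t :=
    (le_ciSup (f := fun i => κ i - μ i ^ 2) (Set.finite_range _).bddAbove i).trans
      (le_max_left _ _)
  have hpair {i j : ι} (hij : i < j) :
      parabola (μ i) (κ i) (pairPoint (μ i) (μ j) (κ i) (κ j)) ≤ t :=
    le_max_of_le_right (le_sup' g (mem_filter.2 ⟨mem_univ (i, j), hij⟩))
  have hlower (x : ℝ) : t ≤ ⨆ i, parabola (μ i) (κ i) x := by
    refine max_le (ciSup_le fun i => (parabola.sub_sq_le _ _ x).trans (le_ciSup (hbdd x) i))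
      (sup'_le _ _ fun p hp => ?_)
    exact (pairPoint.parabola_le_max (hmono (mem_filter.1 hp).2.le) x).trans
      (max_le (le_ciSup (hbdd x) p.1) (le_ciSup (hbdd x) p.2))
  have hmeet (i j : ι) (hij : i ≤ j) :
      ∃ m, parabola (μ i) (κ i) m ≤ t ∧ parabola (μ j) (κ j) m ≤ t := by
    rcases hij.lt_or_eq with hij | rfl
    · exact ⟨_, hpair hij, pairPoint.parabola_right_le (hmono hij.le) (hvertex i) (hvertex j)
        (hpair hij)⟩
    · exact ⟨μ i, by rw [parabola.self]; exact ⟨hvertex i, hvertex i⟩⟩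
  obtain ⟨x, hx, hxt⟩ := exists_mem_Icc_forall_parabola_le μ κ hlo hhi fun i j =>
    (le_total i j).elim (hmeet i j) fun hji => (hmeet j i hji).imp fun _ => And.symm
  exact IsLeast.csInf_eq ⟨⟨x, hx, le_antisymm (ciSup_le hxt) (hlower x)⟩,
    by rintro _ ⟨y, -, rfl⟩; exact hlower y⟩

/-- General formula for the minimax of `K` parabolas: for sorted means `μ_1 ≤ ⋯ ≤ μ_K` with
`κ_i ≥ μ_i²`, the minimum over `[μ_1, μ_K]` of `max_i f_i` equals the maximum of the parabola
minima `κ_i - μ_i²` and the pairwise values `h_{ij}(μ_{ij})`. -/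
theorem upper_variance_stmt9
    {K : ℕ} (hK : 2 ≤ K) (μ κ : Fin K → ℝ) (hmono : Monotone μ) :
    sInf ((fun x : ℝ => ⨆ i, (x ^ 2 - 2 * μ i * x + κ i)) ''
        Set.Icc (μ ⟨0, by omega⟩) (μ ⟨K - 1, by omega⟩))
      = max (⨆ i, (κ i - μ i ^ 2))
          ((Finset.univ.filter fun p : Fin K × Fin K => p.1 < p.2).sup'
            ⟨(⟨0, by omega⟩, ⟨1, by omega⟩), by
              exact Finset.mem_filter.mpr ⟨Finset.mem_univ _, by exact Fin.mk_lt_mk.mpr (by omega)⟩⟩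
            (fun p =>
              (fun x : ℝ => x ^ 2 - 2 * μ p.1 * x + κ p.1)
                (if μ p.1 < μ p.2 then
                  min (max (μ p.1) ((κ p.2 - κ p.1) / (2 * (μ p.2 - μ p.1)))) (μ p.2)
                 else μ p.1))) :=
  sInf_image_iSup_parabola μ κ hmono (fun _ => hmono (Fin.le_def.2 (Nat.zero_le _)))
    (fun i => hmono (Fin.le_def.2 (Nat.le_sub_one_of_lt i.isLt))) _
end

section
/- The upper variance can strictly exceed the maximal variance over the extreme measures: if X ∼ N(0.1, 0.4) under P_1 and X ∼ N(−0.1, 0.4) under P_2, then V̄(X) = Var_{P*}(X) = 0.41 > 0.4 = max{Var_{P_1}(X), Var_{P_2}(X)}, where P* = (P_1 + P_2)/2, while the lower variance equals 0.4. -/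
/-!
Under `N(m, v)` the mean squared deviation from `c` is `v + (m - c)²`. So `V̄(X)` is the infimum
over `c` of `0.4 + max ((0.1 - c)², (0.1 + c)²)`, attained at `c = 0` with value `0.41`, which is
also the variance of the mixture (mean `0`, second moment `0.4 + 0.1²`); replacing `max` by `min`
gives `0.4`, attained at `c = ±0.1`.
-/

open MeasureTheory ProbabilityTheory
open scoped NNReal ENNReal

lemma iInf_max_add_sq_sub_neg (v a : ℝ) :
    ⨅ x : ℝ, max (v + (a - x) ^ 2) (v + (-a - x) ^ 2) = v + a ^ 2 := by
  have hle : ∀ x : ℝ, v + a ^ 2 ≤ max (v + (a - x) ^ 2) (v + (-a - x) ^ 2) := fun x ↦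
    le_of_not_gt fun h ↦ by rw [max_lt_iff] at h; nlinarith [sq_nonneg x]
  refine le_antisymm ?_ (le_ciInf hle)
  refine (ciInf_le ⟨v + a ^ 2, Set.forall_mem_range.2 hle⟩ 0).trans ?_
  simp

lemma iInf_min_add_sq_sub (v a b : ℝ) :
    ⨅ x : ℝ, min (v + (a - x) ^ 2) (v + (b - x) ^ 2) = v := by
  have hle : ∀ x : ℝ, v ≤ min (v + (a - x) ^ 2) (v + (b - x) ^ 2) := fun x ↦
    le_min (by nlinarith [sq_nonneg (a - x)]) (by nlinarith [sq_nonneg (b - x)])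
  refine le_antisymm ?_ (le_ciInf hle)
  refine (ciInf_le ⟨v, Set.forall_mem_range.2 hle⟩ a).trans ?_
  simp

lemma integral_smul_add_measure {Ω : Type*} [MeasurableSpace Ω] {P₁ P₂ : Measure Ω}
    {f : Ω → ℝ} (hf₁ : Integrable f P₁) (hf₂ : Integrable f P₂) (c : ℝ≥0∞) :
    ∫ ω, f ω ∂(c • (P₁ + P₂)) = c.toReal * (∫ ω, f ω ∂P₁ + ∫ ω, f ω ∂P₂) := by
  rw [integral_smul_measure, integral_add_measure hf₁ hf₂, smul_eq_mul]

namespace ProbabilityTheory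

lemma integral_sub_const_sq_eq_variance_add {Ω : Type*} [MeasurableSpace Ω] {μ : Measure Ω}
    [IsProbabilityMeasure μ] {X : Ω → ℝ} (hX : MemLp X 2 μ) (c : ℝ) :
    ∫ ω, (X ω - c) ^ 2 ∂μ = Var[X; μ] + (μ[X] - c) ^ 2 := by
  have hXc : MemLp (fun ω ↦ X ω - c) 2 μ := hX.sub (memLp_const c)
  rw [← variance_sub_const hX.aestronglyMeasurable c, variance_eq_sub hXc,
    integral_sub (hX.integrable one_le_two) (integrable_const c), integral_const]
  simp

lemma integral_sub_const_sq_gaussianReal (m : ℝ) (v : ℝ≥0) (c : ℝ) :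
    ∫ x, (x - c) ^ 2 ∂gaussianReal m v = v + (m - c) ^ 2 := by
  have hid : MemLp (fun x ↦ x) 2 (gaussianReal m v) := memLp_id_gaussianReal 2
  rw [integral_sub_const_sq_eq_variance_add hid c, variance_fun_id_gaussianReal,
    integral_id_gaussianReal]

lemma integrable_sub_const_sq_gaussianReal (m : ℝ) (v : ℝ≥0) (c : ℝ) :
    Integrable (fun x ↦ (x - c) ^ 2) (gaussianReal m v) :=
  ((memLp_id_gaussianReal 2).sub (memLp_const c)).integrable_sq

lemma HasLaw.integrable_comp {Ω 𝓧 : Type*} [MeasurableSpace Ω] [MeasurableSpace 𝓧]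
    {P : Measure Ω} {μ : Measure 𝓧} {X : Ω → 𝓧} (hX : HasLaw X μ P) {f : 𝓧 → ℝ}
    (hf : Integrable f μ) : Integrable (fun ω ↦ f (X ω)) P := by
  rw [← hX.map_eq] at hf
  exact (integrable_map_measure hf.aestronglyMeasurable hX.aemeasurable).mp hf

section GaussianLaw

variable {Ω : Type*} [MeasurableSpace Ω] {P : Measure Ω} {X : Ω → ℝ} {m : ℝ} {v : ℝ≥0}

lemma HasLaw.integral_gaussianReal (hX : HasLaw X (gaussianReal m v) P) : ∫ ω, X ω ∂P = m :=
  hX.integral_eq.trans integral_id_gaussianReal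

lemma HasLaw.integrable_gaussianReal (hX : HasLaw X (gaussianReal m v) P) : Integrable X P :=
  hX.integrable_comp (f := fun x ↦ x) ((memLp_id_gaussianReal 1).integrable le_rfl)

lemma HasLaw.integral_sub_const_sq_gaussianReal (hX : HasLaw X (gaussianReal m v) P) (c : ℝ) :
    ∫ ω, (X ω - c) ^ 2 ∂P = v + (m - c) ^ 2 :=
  (hX.integral_comp (f := fun x ↦ (x - c) ^ 2) (by fun_prop)).trans
    (ProbabilityTheory.integral_sub_const_sq_gaussianReal m v c)

lemma HasLaw.integrable_sub_const_sq_gaussianReal (hX : HasLaw X (gaussianReal m v) P) (c : ℝ) :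
    Integrable (fun ω ↦ (X ω - c) ^ 2) P :=
  hX.integrable_comp (ProbabilityTheory.integrable_sub_const_sq_gaussianReal m v c)

end GaussianLaw

end ProbabilityTheory

theorem upper_variance_stmt15_general
    {Ω : Type*} [MeasurableSpace Ω] (P₁ P₂ : Measure Ω)
    (X : Ω → ℝ) (hX : Measurable X)
    (h1 : P₁.map X = gaussianReal 0.1 0.4)
    (h2 : P₂.map X = gaussianReal (-0.1) 0.4) :
    (⨅ x : ℝ, max (∫ ω, (X ω - x) ^ 2 ∂P₁) (∫ ω, (X ω - x) ^ 2 ∂P₂)) = 0.41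
      ∧ (∫ ω, (X ω - ∫ ω', X ω' ∂((2 : ENNReal)⁻¹ • (P₁ + P₂))) ^ 2
          ∂((2 : ENNReal)⁻¹ • (P₁ + P₂))) = 0.41
      ∧ max (∫ ω, (X ω - ∫ ω', X ω' ∂P₁) ^ 2 ∂P₁)
          (∫ ω, (X ω - ∫ ω', X ω' ∂P₂) ^ 2 ∂P₂) = 0.4
      ∧ (0.4 : ℝ) < 0.41
      ∧ (⨅ x : ℝ, min (∫ ω, (X ω - x) ^ 2 ∂P₁) (∫ ω, (X ω - x) ^ 2 ∂P₂)) = 0.4 := by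
  have hL₁ : HasLaw X (gaussianReal 0.1 0.4) P₁ := ⟨hX.aemeasurable, h1⟩
  have hL₂ : HasLaw X (gaussianReal (-0.1) 0.4) P₂ := ⟨hX.aemeasurable, h2⟩
  have hsq₁ (c : ℝ) : ∫ ω, (X ω - c) ^ 2 ∂P₁ = 0.4 + (0.1 - c) ^ 2 := by
    rw [hL₁.integral_sub_const_sq_gaussianReal]; norm_num
  have hsq₂ (c : ℝ) : ∫ ω, (X ω - c) ^ 2 ∂P₂ = 0.4 + (-0.1 - c) ^ 2 := by
    rw [hL₂.integral_sub_const_sq_gaussianReal]; norm_num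
  have hmix_mean : ∫ ω, X ω ∂((2 : ℝ≥0∞)⁻¹ • (P₁ + P₂)) = 0 := by
    rw [integral_smul_add_measure hL₁.integrable_gaussianReal hL₂.integrable_gaussianReal,
      hL₁.integral_gaussianReal, hL₂.integral_gaussianReal]
    norm_num
  refine ⟨?_, ?_, ?_, by norm_num, ?_⟩
  · simp only [hsq₁, hsq₂, iInf_max_add_sq_sub_neg]
    norm_num
  · rw [hmix_mean, integral_smul_add_measure (hL₁.integrable_sub_const_sq_gaussianReal 0)
      (hL₂.integrable_sub_const_sq_gaussianReal 0), hsq₁, hsq₂]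
    norm_num
  · rw [hL₁.integral_gaussianReal, hL₂.integral_gaussianReal, hsq₁, hsq₂]
    norm_num
  · simp only [hsq₁, hsq₂, iInf_min_add_sq_sub]

/-- If `X ~ N(0.1, 0.4)` under `P₁` and `X ~ N(-0.1, 0.4)` under `P₂`, then the upper variance
equals `Var_{P*}(X) = 0.41 > 0.4 = max{Var_{P₁}(X), Var_{P₂}(X)}` with `P* = (P₁+P₂)/2`,
while the lower variance equals `0.4`. -/
theorem upper_variance_stmt15
    {Ω : Type*} [MeasurableSpace Ω] (P₁ P₂ : Measure Ω)
    [IsProbabilityMeasure P₁] [IsProbabilityMeasure P₂]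
    (X : Ω → ℝ) (hX : Measurable X)
    (h1 : P₁.map X = gaussianReal 0.1 0.4)
    (h2 : P₂.map X = gaussianReal (-0.1) 0.4) :
    (⨅ x : ℝ, max (∫ ω, (X ω - x) ^ 2 ∂P₁) (∫ ω, (X ω - x) ^ 2 ∂P₂)) = 0.41
      ∧ (∫ ω, (X ω - ∫ ω', X ω' ∂((2 : ENNReal)⁻¹ • (P₁ + P₂))) ^ 2
          ∂((2 : ENNReal)⁻¹ • (P₁ + P₂))) = 0.41
      ∧ max (∫ ω, (X ω - ∫ ω', X ω' ∂P₁) ^ 2 ∂P₁)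
          (∫ ω, (X ω - ∫ ω', X ω' ∂P₂) ^ 2 ∂P₂) = 0.4
      ∧ (0.4 : ℝ) < 0.41
      ∧ (⨅ x : ℝ, min (∫ ω, (X ω - x) ^ 2 ∂P₁) (∫ ω, (X ω - x) ^ 2 ∂P₂)) = 0.4 :=
  upper_variance_stmt15_general P₁ P₂ X hX h1 h2
end
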